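/- Let u_1,…,u_ℓ be a t-clustering of a finite simple unweighted undirected graph G, and let u, v be vertices of G such that some shortest path from u to v in G is not contained in the subgraph G_ℓ. Then there exist indices i, i' ∈ {1,…,ℓ} such that d_{G_{i-1}}(u_i,u) + d_{G_{i'-1}}(u_{i'},v) ≤ d_G(u,v) + 1, where u is reachable from u_i in G_{i-1} and v is reachable from u_{i'} in G_{i'-1}. -/

import Mathlib

open SimpleGraph

/-- The closed neighborhood of a vertex as a `Finset`. -/
def closedNbhd {V : Type*} [Fintype V] [DecidableEq V] (G : SimpleGraph V)
    [DecidableRel G.Adj] (v : V) : Finset V :=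
  insert v (G.neighborFinset v)

/-- `clustered G u i` is the union `C_1 ∪ … ∪ C_i` of the first `i` clusters of the
sequence `u` (0-indexed: the clusters of `u 0, …, u (i-1)`).  It equals the union of the
closed neighborhoods of `u 0, …, u (i-1)`. -/
def clustered {V : Type*} [Fintype V] [DecidableEq V] (G : SimpleGraph V)
    [DecidableRel G.Adj] (u : ℕ → V) : ℕ → Finset V
  | 0 => ∅
  | i + 1 => clustered G u i ∪ closedNbhd G (u i)

/-- The `i`-th cluster `C_i = (Γ_G(u_i) ∪ {u_i}) \ (C_1 ∪ … ∪ C_{i-1})` (0-indexed). -/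
def cluster {V : Type*} [Fintype V] [DecidableEq V] (G : SimpleGraph V)
    [DecidableRel G.Adj] (u : ℕ → V) (i : ℕ) : Finset V :=
  closedNbhd G (u i) \ clustered G u i

/-- The graph `G_i`: the subgraph of `G` containing exactly those edges of `G`
whose endpoints do not both lie in `C_1 ∪ … ∪ C_i`. -/
def level {V : Type*} [Fintype V] [DecidableEq V] (G : SimpleGraph V)
    [DecidableRel G.Adj] (u : ℕ → V) (i : ℕ) : SimpleGraph V where
  Adj a b := G.Adj a b ∧ ¬(a ∈ clustered G u i ∧ b ∈ clustered G u i)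
  symm := ⟨fun a b h => ⟨h.1.symm, fun hc => h.2 ⟨hc.2, hc.1⟩⟩⟩
  loopless := ⟨fun a h => G.irrefl h.1⟩

/-- `u 0, …, u (ℓ-1)` is a `t`-clustering of `G`:
(i) each `u i` maximizes `|(Γ_G(v) ∪ {v}) \ (C_1 ∪ … ∪ C_{i-1})|` over all vertices `v`,
(ii) every cluster `C_i` has at least `t` vertices, and
(iii) for every vertex `v`, `|(Γ_G(v) ∪ {v}) \ (C_1 ∪ … ∪ C_ℓ)| < t`. -/
def IsClustering {V : Type*} [Fintype V] [DecidableEq V] (G : SimpleGraph V)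
    [DecidableRel G.Adj] (t ℓ : ℕ) (u : ℕ → V) : Prop :=
  (∀ i < ℓ, ∀ v : V,
      (closedNbhd G v \ clustered G u i).card ≤ (cluster G u i).card) ∧
  (∀ i < ℓ, t ≤ (cluster G u i).card) ∧
  (∀ v : V, (closedNbhd G v \ clustered G u ℓ).card < t)

/-!
Cut a shortest `a`–`b` path at an edge `xy` that is missing from `G_ℓ`; then both `x` and `y`
are clustered. Let `i` be the first index whose cluster meets the `a`–`x` part of the path, say
at `w`. No vertex of that part lies in `C_1 ∪ … ∪ C_{i-1}`, so it survives in `G_{i-1}`, and `w`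
is `u_i` or a neighbour of `u_i` in `G_{i-1}`; hence `d_{G_{i-1}}(u_i, a)` is at most the
length of the `a`–`x` part plus one. The same bound holds on the `y`–`b` side, and the two
parts together with `xy` make up the shortest path.
-/

lemma SimpleGraph.Walk.exists_split_of_mem_edges {V : Type*} {G : SimpleGraph V} {a b : V}
    (p : G.Walk a b) {e : Sym2 V} (he : e ∈ p.edges) :
    ∃ (x y : V) (q : G.Walk a x) (r : G.Walk y b),
      e = s(x, y) ∧ q.length + r.length + 1 = p.length := by
  induction p with
  | nil => simp at he
  | cons hadj p ih =>
    rcases List.mem_cons.mp he with rfl | he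
    · exact ⟨_, _, Walk.nil, p, rfl, by simp⟩
    · obtain ⟨x, y, q, r, rfl, hlen⟩ := ih he
      exact ⟨x, y, Walk.cons hadj q, r, rfl, by simp; omega⟩

section Clustering

variable {V : Type*} [Fintype V] [DecidableEq V] (G : SimpleGraph V) [DecidableRel G.Adj]
  (u : ℕ → V)

lemma exists_lt_mem_cluster_of_mem_clustered {v : V} {n : ℕ} (h : v ∈ clustered G u n) :
    ∃ j < n, v ∈ cluster G u j := by
  induction n with
  | zero => simp [clustered] at h
  | succ n ih =>
    by_cases hv : v ∈ clustered G u n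
    · obtain ⟨j, hj, hc⟩ := ih hv
      exact ⟨j, hj.trans n.lt_succ_self, hc⟩
    · have hnbhd : v ∈ closedNbhd G (u n) := by
        simpa [clustered, hv] using h
      exact ⟨n, n.lt_succ_self, Finset.mem_sdiff.mpr ⟨hnbhd, hv⟩⟩

lemma edist_level_le_one_of_mem_cluster {i : ℕ} {w : V} (hw : w ∈ cluster G u i) :
    (level G u i).edist (u i) w ≤ 1 := by
  obtain ⟨hnbhd, hnot⟩ := Finset.mem_sdiff.mp hw
  rw [edist_le_one_iff_adj_or_eq]
  rcases Finset.mem_insert.mp hnbhd with rfl | hadj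
  · exact Or.inr rfl
  · exact Or.inl ⟨(mem_neighborFinset _ _ _).mp hadj, fun h => hnot h.2⟩

lemma edist_level_le_length_of_support_disjoint {i : ℕ} {a w : V} (p : G.Walk a w)
    (hp : ∀ v ∈ p.support, v ∉ clustered G u i) :
    (level G u i).edist a w ≤ p.length := by
  have hedges : ∀ e ∈ p.edges, e ∈ (level G u i).edgeSet := by
    intro e he
    induction e using Sym2.ind with
    | _ c d =>
      exact ⟨p.edges_subset_edgeSet he, fun h => hp c (p.fst_mem_support_of_mem_edges he) h.1⟩
  simpa using (p.transfer _ hedges).edist_le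

lemma exists_edist_level_le_of_walk_to_clustered {ℓ : ℕ} {a x : V} (p : G.Walk a x)
    (hx : x ∈ clustered G u ℓ) :
    ∃ i < ℓ, (level G u i).edist (u i) a ≤ p.length + 1 := by
  obtain ⟨j, hjℓ, hxj⟩ := exists_lt_mem_cluster_of_mem_clustered G u hx
  have hmeets : ∃ i, ∃ w ∈ p.support, w ∈ cluster G u i := ⟨j, x, p.end_mem_support, hxj⟩
  obtain ⟨w, hwp, hwi⟩ := Nat.find_spec hmeets
  set i := Nat.find hmeets
  have hunmet : ∀ v ∈ p.support, v ∉ clustered G u i := fun v hv hvi => by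
    obtain ⟨k, hki, hvk⟩ := exists_lt_mem_cluster_of_mem_clustered G u hvi
    exact Nat.find_min hmeets hki ⟨v, hv, hvk⟩
  let q := p.takeUntil w hwp
  have hq : (level G u i).edist w a ≤ q.length := by
    rw [edist_comm]
    exact edist_level_le_length_of_support_disjoint G u q
      fun v hv => hunmet v (p.support_takeUntil_subset_support hwp hv)
  refine ⟨i, (Nat.find_min' hmeets ⟨x, p.end_mem_support, hxj⟩).trans_lt hjℓ, ?_⟩
  calc (level G u i).edist (u i) a
      ≤ (level G u i).edist (u i) w + (level G u i).edist w a := SimpleGraph.edist_triangle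
    _ ≤ 1 + q.length := add_le_add (edist_level_le_one_of_mem_cluster G u hwi) hq
    _ ≤ p.length + 1 := by
      rw [add_comm]
      gcongr
      exact p.length_takeUntil_le_length hwp

end Clustering

theorem stmt_11_general {V : Type*} [Fintype V] [DecidableEq V] (G : SimpleGraph V)
    [DecidableRel G.Adj] (ℓ : ℕ) (u : ℕ → V)
    (a b : V)
    (hp : ∃ p : G.Walk a b, p.IsPath ∧ p.length = G.dist a b ∧
      ∃ e ∈ p.edges, e ∉ (level G u ℓ).edgeSet) :
    ∃ i < ℓ, ∃ i' < ℓ,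
      (level G u i).edist (u i) a + (level G u i').edist (u i') b
        ≤ G.edist a b + 1 := by
  obtain ⟨p, -, hlen, e, hep, hel⟩ := hp
  obtain ⟨x, y, q, r, rfl, hsplit⟩ := p.exists_split_of_mem_edges hep
  have hxy : x ∈ clustered G u ℓ ∧ y ∈ clustered G u ℓ := by
    by_contra hxy
    exact hel ⟨p.edges_subset_edgeSet hep, hxy⟩
  obtain ⟨i, hiℓ, hi⟩ := exists_edist_level_le_of_walk_to_clustered G u q hxy.1
  obtain ⟨i', hi'ℓ, hi'⟩ := exists_edist_level_le_of_walk_to_clustered G u r.reverse hxy.2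
  have hedist : G.edist a b = p.length := by
    rw [← p.reachable.coe_dist_eq_edist, hlen]
  refine ⟨i, hiℓ, i', hi'ℓ, ?_⟩
  calc (level G u i).edist (u i) a + (level G u i').edist (u i') b
      ≤ (q.length + 1) + (r.reverse.length + 1) := add_le_add hi hi'
    _ = G.edist a b + 1 := by
      rw [hedist, ← hsplit, Walk.length_reverse]
      push_cast
      ring

/-- Let `u 0, …, u (ℓ-1)` be a `t`-clustering of a finite graph `G` and let `a`, `b` be
vertices such that some shortest path from `a` to `b` in `G` is not contained in the
subgraph `G_ℓ`.  Then there are indices `i, i' < ℓ` with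
`d_{G_{i-1}}(u_i, a) + d_{G_{i'-1}}(u_{i'}, b) ≤ d_G(a,b) + 1` (in 1-indexed notation);
here the graph in which distances from the 0-indexed center `u i` are measured is
`level G u i`, and the extended distances (`ℕ∞`) in particular force `a` to be reachable
from `u i` and `b` from `u i'` in the respective subgraphs. -/
theorem stmt_11 {V : Type*} [Fintype V] [DecidableEq V] (G : SimpleGraph V)
    [DecidableRel G.Adj] (t ℓ : ℕ) (u : ℕ → V) (h : IsClustering G t ℓ u)
    (a b : V)
    (hp : ∃ p : G.Walk a b, p.IsPath ∧ p.length = G.dist a b ∧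
      ∃ e ∈ p.edges, e ∉ (level G u ℓ).edgeSet) :
    ∃ i < ℓ, ∃ i' < ℓ,
      (level G u i).edist (u i) a + (level G u i').edist (u i') b
        ≤ G.edist a b + 1 :=
  stmt_11_general G ℓ u a b hp
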